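/- For every t ∈ ℂ with Re t ≥ 0, Im t ≤ 0 and t ≠ 1, one has the strict inequality |t|·|ξ(t)| < |t² − 1|^{3/2}. (Equivalently, |ξ(t)/w(t)| < 1 where w(t) = (t²−1)^{3/2}/t is the ratio (ξ')²/ξ''.) -/

import Mathlib

open Complex Real

/-- The branch `R(t) = √(t-1)·√(t+1)` with principal complex square roots. -/
noncomputable def Rb (t : ℂ) : ℂ := (t - 1) ^ ((1 : ℂ)/2) * (t + 1) ^ ((1 : ℂ)/2)

/-- `ξ(t) = (1/2)(t·R(t) − Log(t + R(t)))` with the principal logarithm. -/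
noncomputable def xi (t : ℂ) : ℂ := (1/2 : ℂ) * (t * Rb t - Complex.log (t + Rb t))

/-!
Since `ξ' = R` and `ξ(1) = 0`, the mean value inequality along the segment from `t` to `1`
bounds `|ξ(t)|` by `|t - 1|` times the maximum of `|R(s)| = √(|s - 1| |s + 1|)` there, which is at
most `√(|t - 1| max 2 |t + 1|)`. With `r = |t|` and `q = |t + 1|`, so that `r² + 1 ≤ q²` because
`Re t ≥ 0`, the claim then reduces to the elementary inequality `r² max 2 q < q³`.
When `t ∈ [0, 1)` the segment lies on the cut, where `ξ` is not holomorphic; there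
`ξ(x) = i (x √(1 - x²) - arccos x) / 2` and its derivative along the real line is still `R(x)`.
-/

open Set Topology

lemma cpow_one_half_sq (z : ℂ) : (z ^ (1 / 2 : ℂ)) ^ 2 = z := by
  simp [one_div]

lemma Rb_sq (s : ℂ) : Rb s ^ 2 = s ^ 2 - 1 := by
  rw [Rb, mul_pow, cpow_one_half_sq, cpow_one_half_sq]; ring

lemma ofReal_mul_add_mem_slitPlane {z : ℂ} {a b : ℝ} (hz : z ∈ slitPlane) (ha : 0 < a)
    (hb : 0 ≤ b) : a * z + b ∈ slitPlane := by
  rw [mem_slitPlane_iff] at hz ⊢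
  simp only [add_re, add_im, mul_re, mul_im, ofReal_re, ofReal_im, zero_mul, sub_zero, add_zero]
  rcases hz with hz | hz
  · exact Or.inl (by positivity)
  · exact Or.inr (mul_ne_zero ha.ne' hz)

lemma norm_Rb (s : ℂ) : ‖Rb s‖ = √‖(s - 1) * (s + 1)‖ := by
  rw [show (s - 1) * (s + 1) = Rb s ^ 2 by rw [Rb_sq]; ring, norm_pow, Real.sqrt_sq (norm_nonneg _)]

lemma Rb_ne_zero {s : ℂ} (h1 : s - 1 ≠ 0) (h2 : s + 1 ≠ 0) : Rb s ≠ 0 := by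
  intro h
  have := Rb_sq s
  rw [h, show s ^ 2 - 1 = (s - 1) * (s + 1) by ring] at this
  exact mul_ne_zero h1 h2 (by simpa using this.symm)

/-- `(s + Rb s) (s - Rb s) = 1`, so `s + Rb s = x < 0` would force `s + 1 = (x + 1)² / (2x) ≤ 0`. -/
lemma add_Rb_mem_slitPlane {s : ℂ} (hs : s + 1 ∈ slitPlane) : s + Rb s ∈ slitPlane := by
  have hprod : (s + Rb s) * (s - Rb s) = 1 := by linear_combination -(Rb_sq s)
  by_contra h
  obtain ⟨hre, him⟩ := Complex.le_def.1 (mem_slitPlane_iff_not_le_zero.not_left.1 h)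
  set x := (s + Rb s).re
  have hx : s + Rb s = x := Complex.ext rfl (by simpa using him)
  have hx0 : x ≠ 0 := by rintro h0; simp [hx, h0] at hprod
  have hinv : s - Rb s = (x : ℂ)⁻¹ := eq_inv_of_mul_eq_one_right (hx ▸ hprod)
  have hs' : s + 1 = ((x + x⁻¹) / 2 + 1 : ℝ) := by
    push_cast; linear_combination (hx + hinv) / 2
  rw [hs', ofReal_mem_slitPlane] at hs
  have hxneg : x < 0 := lt_of_le_of_ne (by simpa using hre) hx0
  nlinarith [mul_inv_cancel₀ hx0, sq_nonneg (x + 1)]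

lemma hasDerivAt_cpow_one_half {z : ℂ} (hz : z ∈ slitPlane) :
    HasDerivAt (fun w : ℂ => w ^ (1 / 2 : ℂ)) (z ^ (1 / 2 : ℂ) / (2 * z)) z := by
  convert (hasDerivAt_id' z).cpow_const (c := 1 / 2) hz using 1
  rw [cpow_sub _ _ (slitPlane_ne_zero hz), cpow_one]; ring

lemma hasDerivAt_Rb {s : ℂ} (h1 : s - 1 ∈ slitPlane) (h2 : s + 1 ∈ slitPlane) :
    HasDerivAt Rb (s / Rb s) s := by
  have h1' := slitPlane_ne_zero h1
  have h2' := slitPlane_ne_zero h2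
  have hR0 := Rb_ne_zero h1' h2'
  refine (((hasDerivAt_cpow_one_half h1).comp_sub_const s 1).mul
    ((hasDerivAt_cpow_one_half h2).comp_add_const s 1)).congr_deriv ?_
  rw [eq_div_iff hR0]
  field_simp
  rw [← Rb]
  linear_combination 2 * s * Rb_sq s

lemma hasDerivAt_xi {s : ℂ} (h1 : s - 1 ∈ slitPlane) (h2 : s + 1 ∈ slitPlane) :
    HasDerivAt xi (Rb s) s := by
  have hR0 := Rb_ne_zero (slitPlane_ne_zero h1) (slitPlane_ne_zero h2)
  have hsR := slitPlane_ne_zero (add_Rb_mem_slitPlane h2)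
  refine ((((hasDerivAt_id s).mul (hasDerivAt_Rb h1 h2)).sub
    (((hasDerivAt_id s).add (hasDerivAt_Rb h1 h2)).clog (add_Rb_mem_slitPlane h2))).const_mul
    (1 / 2 : ℂ)).congr_deriv ?_
  simp only [Pi.add_apply, id_eq]
  field_simp
  linear_combination (-(s + Rb s)) * Rb_sq s

lemma xi_one : xi 1 = 0 := by
  simp [xi, Rb]

lemma continuousAt_xi_one : ContinuousAt xi 1 := by
  have hRb : ContinuousAt Rb 1 :=
    ((continuousAt_cpow_const_of_re_pos (by simp) (by norm_num)).comp
      (continuousAt_id.sub continuousAt_const)).mul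
    ((continuousAt_cpow_const_of_re_pos (by norm_num) (by norm_num)).comp
      (continuousAt_id.add continuousAt_const))
  have hlog : ContinuousAt (fun s => log (s + Rb s)) 1 :=
    (continuousAt_clog (by simp [Rb])).comp (continuousAt_id.add hRb)
  exact continuousAt_const.mul ((continuousAt_id.mul hRb).sub hlog)

/-- `Rb` is not differentiable at `1`, so the segment runs from `t` to `1`: the mean value
inequality needs the derivative only on `[0, 1)`. -/
lemma norm_xi_le_of_hasDerivAt_segment {t : ℂ}
    (h : ∀ τ ∈ Ico (0 : ℝ) 1, HasDerivAt (fun τ : ℝ => xi (t + τ * (1 - t)))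
      (Rb (t + τ * (1 - t)) * (1 - t)) τ) :
    ‖xi t‖ ≤ ‖t - 1‖ * √(‖t - 1‖ * max 2 ‖t + 1‖) := by
  have hcont : ContinuousOn (fun τ : ℝ => xi (t + τ * (1 - t))) (Icc 0 1) := by
    intro τ hτ
    rcases hτ.2.lt_or_eq with hτ1 | rfl
    · exact (h τ ⟨hτ.1, hτ1⟩).continuousAt.continuousWithinAt
    · refine ContinuousAt.continuousWithinAt ?_
      refine ContinuousAt.comp (g := xi) ?_ (by fun_prop)
      simpa using continuousAt_xi_one
  have hbound : ∀ τ ∈ Ico (0 : ℝ) 1,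
      ‖Rb (t + τ * (1 - t)) * (1 - t)‖ ≤ ‖t - 1‖ * √(‖t - 1‖ * max 2 ‖t + 1‖) := by
    rintro τ ⟨hτ0, hτ1⟩
    have hm : ‖(t + τ * (1 - t)) - 1‖ ≤ ‖t - 1‖ := by
      rw [show t + τ * (1 - t) - 1 = ((1 - τ : ℝ) : ℂ) * (t - 1) by push_cast; ring, norm_mul,
        norm_real, Real.norm_of_nonneg (by linarith)]
      nlinarith [norm_nonneg (t - 1)]
    have hp : ‖(t + τ * (1 - t)) + 1‖ ≤ max 2 ‖t + 1‖ := by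
      rw [show t + τ * (1 - t) + 1 = ((1 - τ : ℝ) : ℂ) * (t + 1) + (τ : ℂ) * 2 by push_cast; ring]
      refine (norm_add_le _ _).trans ?_
      rw [norm_mul, norm_mul, norm_real, norm_real, Real.norm_of_nonneg (by linarith),
        Real.norm_of_nonneg hτ0, Complex.norm_two]
      nlinarith [le_max_left 2 ‖t + 1‖, le_max_right 2 ‖t + 1‖]
    rw [norm_mul, norm_Rb, norm_sub_rev 1 t, mul_comm, norm_mul]
    gcongr
  simpa [xi_one, norm_sub_rev] using norm_image_sub_le_of_norm_deriv_right_le_segment hcont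
    (fun τ hτ => (h τ hτ).hasDerivWithinAt) hbound 1 ⟨zero_le_one, le_rfl⟩

lemma hasDerivAt_xi_segment_of_mem_slitPlane {t : ℂ} (h1 : t - 1 ∈ slitPlane)
    (h2 : t + 1 ∈ slitPlane) :
    ∀ τ ∈ Ico (0 : ℝ) 1,
    HasDerivAt (fun τ : ℝ => xi (t + τ * (1 - t))) (Rb (t + τ * (1 - t)) * (1 - t)) τ := by
  rintro τ ⟨hτ0, hτ1⟩
  have hpath : HasDerivAt (fun τ : ℝ => t + τ * (1 - t)) (1 - t) τ := by
    simpa using ((hasDerivAt_id τ).ofReal_comp.mul_const (1 - t)).const_add t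
  refine (hasDerivAt_xi ?_ ?_).comp τ hpath
  · convert ofReal_mul_add_mem_slitPlane h1 (sub_pos.2 hτ1) le_rfl using 1
    push_cast; ring
  · convert ofReal_mul_add_mem_slitPlane h2 (sub_pos.2 hτ1) (mul_nonneg zero_le_two hτ0) using 1
    push_cast; ring

lemma ofReal_cpow_one_half {x : ℝ} (hx : 0 ≤ x) : (x : ℂ) ^ (1 / 2 : ℂ) = √x := by
  rw [Real.sqrt_eq_rpow, ofReal_cpow hx]; push_cast; rfl

lemma ofReal_cpow_one_half_of_nonpos {x : ℝ} (hx : x ≤ 0) :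
    (x : ℂ) ^ (1 / 2 : ℂ) = √(-x) * I := by
  rw [ofReal_cpow_of_nonpos hx, ← ofReal_neg, ofReal_cpow_one_half (neg_nonneg.2 hx),
    show π * I * (1 / 2) = π / 2 * I by ring, exp_pi_div_two_mul_I]

lemma Rb_ofReal {x : ℝ} (h1 : -1 ≤ x) (h2 : x ≤ 1) : Rb x = √(1 - x ^ 2) * I := by
  rw [Rb, show (x : ℂ) - 1 = (x - 1 : ℝ) by push_cast; ring,
    show (x : ℂ) + 1 = (x + 1 : ℝ) by push_cast; ring, ofReal_cpow_one_half_of_nonpos (by linarith),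
    ofReal_cpow_one_half (by linarith), mul_right_comm, ← ofReal_mul, ← Real.sqrt_mul (by linarith)]
  ring_nf

/-- On `[-1, 1]`, `x + Rb x = e^{i arccos x}`. -/
lemma xi_ofReal {x : ℝ} (h1 : -1 ≤ x) (h2 : x ≤ 1) :
    xi x = ((x * √(1 - x ^ 2) - arccos x) / 2 : ℝ) * I := by
  have hexp : (x : ℂ) + Rb x = exp (arccos x * I) := by
    rw [Rb_ofReal h1 h2, exp_mul_I, ← ofReal_cos, ← ofReal_sin, cos_arccos h1 h2, sin_arccos]
  have hlog : log ((x : ℂ) + Rb x) = arccos x * I := by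
    rw [hexp, Complex.log_exp] <;> simp only [mul_I_im, ofReal_re]
    · linarith [arccos_nonneg x, Real.pi_pos]
    · exact arccos_le_pi x
  rw [xi, hlog, Rb_ofReal h1 h2]
  push_cast; ring

lemma hasDerivAt_mul_sqrt_one_sub_sq_sub_arccos {y : ℝ} (hy : y ∈ Ioo (-1 : ℝ) 1) :
    HasDerivAt (fun y => y * √(1 - y ^ 2) - arccos y) (2 * √(1 - y ^ 2)) y := by
  have hpos : 0 < 1 - y ^ 2 := by nlinarith [hy.1, hy.2]
  have hsqrt : HasDerivAt (fun y : ℝ => √(1 - y ^ 2)) (-(2 * y) / (2 * √(1 - y ^ 2))) y := by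
    simpa using ((hasDerivAt_pow 2 y).const_sub 1).sqrt hpos.ne'
  refine (((hasDerivAt_id' y).mul hsqrt).sub (hasDerivAt_arccos hy.1.ne' hy.2.ne)).congr_deriv ?_
  have hs := Real.sq_sqrt hpos.le
  field_simp
  linear_combination -hs

lemma hasDerivAt_xi_ofReal {y : ℝ} (hy : y ∈ Ioo (-1 : ℝ) 1) :
    HasDerivAt (fun y : ℝ => xi y) (Rb y) y := by
  have heq : (fun y : ℝ => (((y * √(1 - y ^ 2) - arccos y) / 2 : ℝ) : ℂ) * I) =ᶠ[𝓝 y]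
      fun y : ℝ => xi y :=
    Filter.eventually_of_mem (isOpen_Ioo.mem_nhds hy)
      fun z hz => (xi_ofReal hz.1.le hz.2.le).symm
  refine ((((hasDerivAt_mul_sqrt_one_sub_sq_sub_arccos hy).div_const 2).ofReal_comp.mul_const
    I).congr_of_eventuallyEq heq.symm).congr_deriv ?_
  rw [Rb_ofReal hy.1.le hy.2.le]
  push_cast; ring

lemma hasDerivAt_xi_segment_ofReal {x : ℝ} (hx : -1 < x) (hx1 : x < 1) :
    ∀ τ ∈ Ico (0 : ℝ) 1, HasDerivAt (fun τ : ℝ => xi (x + τ * (1 - x)))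
      (Rb (x + τ * (1 - x)) * (1 - x)) τ := by
  rintro τ ⟨hτ0, hτ1⟩
  have hmem : x + τ * (1 - x) ∈ Ioo (-1 : ℝ) 1 := ⟨by nlinarith, by nlinarith⟩
  have hpath : HasDerivAt (fun τ : ℝ => x + τ * (1 - x)) (1 - x) τ := by
    simpa using ((hasDerivAt_id τ).mul_const (1 - x)).const_add x
  have h := (hasDerivAt_xi_ofReal hmem).scomp τ hpath
  rw [show ((fun y : ℝ => xi y) ∘ fun τ => x + τ * (1 - x)) = fun τ : ℝ => xi (x + τ * (1 - x))
    by funext σ; simp, real_smul] at h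
  exact h.congr_deriv (by push_cast; ring)

lemma sq_mul_max_two_lt_cube {r q : ℝ} (h : r ^ 2 + 1 ≤ q ^ 2) (hq : 0 ≤ q) :
    r ^ 2 * max 2 q < q ^ 3 := by
  have hq1 : 1 ≤ q := by nlinarith [sq_nonneg r]
  rcases le_total q 2 with hq2 | hq2
  · rw [max_eq_left hq2]
    nlinarith [sq_nonneg (3 * q - 4), mul_nonneg (sub_nonneg.2 hq1) (sub_nonneg.2 hq2)]
  · rw [max_eq_right hq2]
    nlinarith

lemma mul_mul_sqrt_lt_rpow {r p q M : ℝ} (hr : 0 ≤ r) (hp : 0 < p) (hM : 0 ≤ M)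
    (h : r ^ 2 * M < q ^ 3) : r * (p * √(p * M)) < (p * q) ^ (3 / 2 : ℝ) := by
  have hq : 0 < q := by
    by_contra! hq
    nlinarith [pow_nonneg (neg_nonneg.2 hq) 3, mul_nonneg (sq_nonneg r) hM]
  calc r * (p * √(p * M)) = √((r * p) ^ 2 * (p * M)) := by
        rw [Real.sqrt_mul (sq_nonneg (r * p)), Real.sqrt_sq (by positivity)]; ring
    _ < √((p * q) ^ 3) := by
        refine Real.sqrt_lt_sqrt (by positivity) ?_
        nlinarith [mul_lt_mul_of_pos_left h (pow_pos hp 3)]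
    _ = (p * q) ^ (3 / 2 : ℝ) := by
        rw [Real.sqrt_eq_rpow, ← Real.rpow_natCast, ← Real.rpow_mul (by positivity)]; norm_num

lemma norm_sq_add_one_le_norm_add_one_sq {t : ℂ} (hre : 0 ≤ t.re) :
    ‖t‖ ^ 2 + 1 ≤ ‖t + 1‖ ^ 2 := by
  rw [Complex.sq_norm, Complex.sq_norm, normSq_apply, normSq_apply]
  simp only [add_re, add_im, one_re, one_im, add_zero]
  nlinarith

theorem stmt7_general (t : ℂ) (hre : 0 ≤ t.re) (ht : t ≠ 1) :
    ‖t‖ * ‖xi t‖ <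
      ‖t ^ 2 - 1‖ ^ ((3 : ℝ)/2) := by
  have h2 : t + 1 ∈ slitPlane :=
    mem_slitPlane_iff.2 (Or.inl (by simp only [add_re, one_re]; linarith))
  have hxi : ‖xi t‖ ≤ ‖t - 1‖ * √(‖t - 1‖ * max 2 ‖t + 1‖) := by
    refine norm_xi_le_of_hasDerivAt_segment ?_
    by_cases h1 : t - 1 ∈ slitPlane
    · exact hasDerivAt_xi_segment_of_mem_slitPlane h1 h2
    · obtain ⟨hle, him⟩ := Complex.le_def.1 (mem_slitPlane_iff_not_le_zero.not_left.1 h1)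
      obtain ⟨x, rfl⟩ : ∃ x : ℝ, t = x := ⟨t.re, Complex.ext rfl (by simpa using him)⟩
      simp only [sub_re, ofReal_re, one_re, zero_re, sub_nonpos] at hle hre
      exact hasDerivAt_xi_segment_ofReal (by linarith) (hle.lt_of_ne (by exact_mod_cast ht))
  calc ‖t‖ * ‖xi t‖ ≤ ‖t‖ * (‖t - 1‖ * √(‖t - 1‖ * max 2 ‖t + 1‖)) := by gcongr
    _ < (‖t - 1‖ * ‖t + 1‖) ^ (3 / 2 : ℝ) :=
      mul_mul_sqrt_lt_rpow (norm_nonneg _) (norm_pos_iff.2 (sub_ne_zero.2 ht)) (by positivity)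
        (sq_mul_max_two_lt_cube (norm_sq_add_one_le_norm_add_one_sq hre) (norm_nonneg _))
    _ = ‖t ^ 2 - 1‖ ^ ((3 : ℝ) / 2) := by rw [← norm_mul]; ring_nf

theorem stmt7 (t : ℂ) (hre : 0 ≤ t.re) (him : t.im ≤ 0) (ht : t ≠ 1) :
    ‖t‖ * ‖xi t‖ <
      ‖t ^ 2 - 1‖ ^ ((3 : ℝ)/2) :=
  stmt7_general t hre ht
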